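/- Let K = [0,2] × ℝ ⊆ ℝ² and h : K → ℝ, h(x₁, x₂) = x₂² − x₁² − x₁. Then for every z = (z₁, z₂) ∈ K, the set argmin_{(x₁,x₂) ∈ K} [h(x₁, x₂) + (1/2)‖(x₁, x₂) − (z₁, z₂)‖²] equals {(2, z₂/3)}. Consequently, the proximal point iterates x^{k+1} = prox_h(K, x^k) starting from any x¹ ∈ K satisfy x^k = (2, x¹₂/3^{k−1}) for all k ≥ 2, and they converge to the global minimizer (2, 0) of h over K. -/

import Mathlib

open Set Filter

noncomputable section

/-- The point of `ℝ²` (with the Euclidean norm) with coordinates `a`, `b`. -/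
def pt (a b : ℝ) : EuclideanSpace ℝ (Fin 2) := (WithLp.equiv 2 (Fin 2 → ℝ)).symm ![a, b]

/-- `K = [0,2] × ℝ`. -/
def K192 : Set (EuclideanSpace ℝ (Fin 2)) := {x | x 0 ∈ Icc (0:ℝ) 2}

/-- `h(x₁, x₂) = x₂² − x₁² − x₁`. -/
def h19 (x : EuclideanSpace ℝ (Fin 2)) : ℝ := (x 1) ^ 2 - (x 0) ^ 2 - x 0

/-- `prox_h(K, z) := argmin_{x ∈ K} [h(x) + (1/2)‖x − z‖²]`. -/
def proxSet19 (z : EuclideanSpace ℝ (Fin 2)) : Set (EuclideanSpace ℝ (Fin 2)) :=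
  {x ∈ K192 | ∀ y ∈ K192,
    h19 x + (1/2) * ‖x - z‖ ^ 2 ≤ h19 y + (1/2) * ‖y - z‖ ^ 2}

lemma pt0 (a b : ℝ) : pt a b 0 = a := rfl
lemma pt1 (a b : ℝ) : pt a b 1 = b := rfl

lemma nsq (x : EuclideanSpace ℝ (Fin 2)) : ‖x‖^2 = (x 0)^2 + (x 1)^2 := by
  rw [EuclideanSpace.norm_eq, Real.sq_sqrt (by positivity)]
  simp [Fin.sum_univ_two, sq_abs]

lemma subapp (x z : EuclideanSpace ℝ (Fin 2)) (i : Fin 2) : (x - z) i = x i - z i := rfl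

lemma ptext (x : EuclideanSpace ℝ (Fin 2)) (a b : ℝ) (h0 : x 0 = a) (h1 : x 1 = b) :
    x = pt a b := by
  ext i
  fin_cases i <;> simpa [pt]

lemma ptK (b : ℝ) : pt 2 b ∈ K192 := by
  simp [K192, pt0]

/-- The key algebraic identity / inequality. -/
lemma key (z y : EuclideanSpace ℝ (Fin 2)) :
    h19 (pt 2 (z 1 / 3)) + (1/2) * ‖pt 2 (z 1 / 3) - z‖ ^ 2
      + ((3/2) * (y 1 - z 1 / 3)^2 + (2 - y 0) * (y 0 / 2 + 2 + z 0))
      = h19 y + (1/2) * ‖y - z‖ ^ 2 := by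
  simp only [h19, nsq, subapp, pt0, pt1]
  ring

lemma prox_eq (z : EuclideanSpace ℝ (Fin 2)) (hz : z ∈ K192) :
    proxSet19 z = {pt 2 (z 1 / 3)} := by
  have hz0 : (0:ℝ) ≤ z 0 := hz.1
  ext x
  simp only [proxSet19, Set.mem_setOf_eq, Set.mem_singleton_iff, Set.mem_sep_iff]
  constructor
  · rintro ⟨hxK, hmin⟩
    have hle := hmin (pt 2 (z 1 / 3)) (ptK _)
    have hk := key z x
    have hx0 : x 0 ∈ Icc (0:ℝ) 2 := hxK
    have h1 : (3/2) * (x 1 - z 1 / 3)^2 + (2 - x 0) * (x 0 / 2 + 2 + z 0) ≤ 0 := by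
      linarith
    have hA : (0:ℝ) ≤ (3/2) * (x 1 - z 1 / 3)^2 := by positivity
    have hB : (0:ℝ) ≤ (2 - x 0) * (x 0 / 2 + 2 + z 0) := by
      have := hx0.1; have := hx0.2; nlinarith
    have hBz : (2 - x 0) * (x 0 / 2 + 2 + z 0) = 0 := by linarith
    have hx0e : x 0 = 2 := by
      rcases mul_eq_zero.1 hBz with h | h
      · linarith
      · have := hx0.1; linarith
    have hAz : (3/2) * (x 1 - z 1 / 3)^2 = 0 := by linarith
    have hx1e : x 1 = z 1 / 3 := by
      have : (x 1 - z 1 / 3)^2 = 0 := by linarith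
      have := pow_eq_zero_iff (n := 2) (by norm_num) |>.1 this
      linarith
    exact ptext x _ _ hx0e hx1e
  · rintro rfl
    refine ⟨ptK _, fun y hy => ?_⟩
    have hk := key z y
    have hy0 : y 0 ∈ Icc (0:ℝ) 2 := hy
    have hA : (0:ℝ) ≤ (3/2) * (y 1 - z 1 / 3)^2 := by positivity
    have hB : (0:ℝ) ≤ (2 - y 0) * (y 0 / 2 + 2 + z 0) := by
      have := hy0.1; have := hy0.2; nlinarith
    linarith

/-- For `K = [0,2] × ℝ` and `h(x₁,x₂) = x₂² − x₁² − x₁`: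
`prox_h(K, z) = {(2, z₂/3)}` for every `z ∈ K`; consequently the proximal point
iterates starting from any `x¹ ∈ K` satisfy `x^k = (2, x¹₂/3^{k−1})` for `k ≥ 2` and
converge to `(2, 0)`, the global minimizer of `h` over `K`. -/
theorem statement_19 :
    (∀ z ∈ K192, proxSet19 z = {pt 2 (z 1 / 3)}) ∧
    (∀ x : ℕ → EuclideanSpace ℝ (Fin 2), x 1 ∈ K192 →
      (∀ k : ℕ, 1 ≤ k → x (k + 1) ∈ proxSet19 (x k)) →
      (∀ k : ℕ, 2 ≤ k → x k = pt 2 ((x 1) 1 / 3 ^ (k - 1))) ∧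
      Filter.Tendsto x Filter.atTop (nhds (pt 2 0))) ∧
    (pt 2 0 ∈ K192 ∧ ∀ y ∈ K192, h19 (pt 2 0) ≤ h19 y) := by
  refine ⟨fun z hz => prox_eq z hz, fun x hx1 hiter => ?_, ptK 0, fun y hy => ?_⟩
  · set c : ℝ := (x 1) 1 with hc
    have hform : ∀ k : ℕ, 2 ≤ k → x k = pt 2 (c / 3 ^ (k - 1)) := by
      intro k hk
      induction k with
      | zero => omega
      | succ n ih =>
        rcases Nat.lt_or_ge n 2 with hn | hn
        · interval_cases n
          · omega
          · -- k = 2 : x 2 ∈ proxSet19 (x 1)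
            have h2 := hiter 1 le_rfl
            rw [prox_eq (x 1) hx1] at h2
            simp only [Set.mem_singleton_iff] at h2
            simpa using h2
        · have hxn := ih (by omega)
          have h2 := hiter n (by omega)
          rw [prox_eq (x n) (hxn ▸ ptK _)] at h2
          simp only [Set.mem_singleton_iff] at h2
          rw [h2, hxn, pt1, div_div, ← pow_succ, show n - 1 + 1 = n + 1 - 1 by omega]
    refine ⟨hform, ?_⟩
    have hd : Tendsto (fun k : ℕ => c / 3 ^ (k - 1)) atTop (nhds 0) := by
      have h3 : Tendsto (fun m : ℕ => c * (1/3 : ℝ) ^ m) atTop (nhds 0) := by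
        simpa using (tendsto_pow_atTop_nhds_zero_of_lt_one (by norm_num)
          (by norm_num : (1/3:ℝ) < 1)).const_mul c
      have := h3.comp (tendsto_sub_atTop_nat 1)
      simpa [div_eq_mul_inv, inv_pow, Function.comp_def] using this
    have hgt : Tendsto (fun k : ℕ => pt 2 (c / 3 ^ (k - 1))) atTop (nhds (pt 2 0)) := by
      rw [tendsto_iff_norm_sub_tendsto_zero]
      have heq : ∀ k : ℕ, ‖pt 2 (c / 3 ^ (k - 1)) - pt 2 0‖ = |c / 3 ^ (k - 1)| := by
        intro k
        have : ‖pt 2 (c / 3 ^ (k - 1)) - pt 2 0‖^2 = (c / 3 ^ (k - 1))^2 := by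
          rw [nsq]; simp [subapp, pt0, pt1]
        have habs : ‖pt 2 (c / 3 ^ (k - 1)) - pt 2 0‖^2 = |c / 3 ^ (k - 1)|^2 := by
          rw [this, sq_abs]
        calc ‖pt 2 (c / 3 ^ (k - 1)) - pt 2 0‖
            = Real.sqrt (‖pt 2 (c / 3 ^ (k - 1)) - pt 2 0‖^2) :=
              (Real.sqrt_sq (norm_nonneg _)).symm
          _ = Real.sqrt (|c / 3 ^ (k - 1)|^2) := by rw [habs]
          _ = |c / 3 ^ (k - 1)| := Real.sqrt_sq (abs_nonneg _)
      simp only [heq]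
      simpa using hd.abs
    refine Tendsto.congr' ?_ hgt
    filter_upwards [eventually_ge_atTop 2] with k hk
    exact (hform k hk).symm
  · have hy0 : y 0 ∈ Icc (0:ℝ) 2 := hy
    simp only [h19, pt0, pt1]
    have := hy0.1; have := hy0.2
    nlinarith [sq_nonneg (y 1)]
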